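/- arXiv:2506.04525 — 4 statements merged into one kernel-verified Lean document; each statement's English description precedes it below -/
import Mathlib

section
/- Let R* be an m×n nonnegative matrix with a block-diagonal 'majority-minority' structure: there exist partitions of users [m] = U_maj ∪ U_min and items [n] = I_maj ∪ I_min such that r*_{u,i} = 0 whenever u ∈ U_maj, i ∈ I_min or u ∈ U_min, i ∈ I_maj. Suppose Ω ⊆ [m]×[n] is a set of observed entries such that every observed entry (u,i) with u ∈ U_min and i ∈ I_min satisfies r*_{u,i} = 0. Then among all matrices X minimizing rank(X) subject to x_{u,i} = r*_{u,i} for all (u,i) ∈ Ω, the sparsest such minimizer has x_{u,i} = 0 for all u ∈ [m] and all i ∈ I_min. -/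
open Matrix

/-- number of nonzero entries of a matrix -/
noncomputable def nnz {m n : ℕ} (X : Matrix (Fin m) (Fin n) ℝ) : ℕ :=
  {p : Fin m × Fin n | X p.1 p.2 ≠ 0}.ncard

/-!
Zeroing out the minority columns of a feasible matrix keeps it feasible, because every observed
entry in a minority column is zero (by the block structure in the majority rows and by assumption
in the minority rows), and it cannot raise the rank, being a right multiplication by a diagonal
matrix. So it is again a rank minimizer, and it has strictly fewer nonzero entries unless the
minority columns were already zero.
-/

namespace Matrix

variable {m n α : Type*}

def zeroColumns [Zero α] (X : Matrix m n α) (S : Finset n) [DecidableEq n] : Matrix m n α :=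
  of fun u j => if j ∈ S then 0 else X u j

@[simp]
theorem zeroColumns_apply [Zero α] [DecidableEq n] (X : Matrix m n α) (S : Finset n) (u : m)
    (j : n) : X.zeroColumns S u j = if j ∈ S then 0 else X u j :=
  rfl

theorem zeroColumns_eq_mul_diagonal [Fintype n] [DecidableEq n] [Semiring α]
    (X : Matrix m n α) (S : Finset n) :
    X.zeroColumns S = X * diagonal fun j => if j ∈ S then 0 else (1 : α) := by
  ext u j
  by_cases hj : j ∈ S <;> simp [hj]

theorem rank_zeroColumns_le [Fintype n] [DecidableEq n] [CommRing α] [StrongRankCondition α]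
    (X : Matrix m n α) (S : Finset n) : (X.zeroColumns S).rank ≤ X.rank := by
  rw [zeroColumns_eq_mul_diagonal]
  exact rank_mul_le_left _ _

end Matrix

theorem nnz_zeroColumns_lt {m n : ℕ} (X : Matrix (Fin m) (Fin n) ℝ) {S : Finset (Fin n)}
    {u : Fin m} {i : Fin n} (hi : i ∈ S) (hX : X u i ≠ 0) : nnz (X.zeroColumns S) < nnz X := by
  refine Set.ncard_lt_ncard ⟨fun p hp => ?_, fun hsub => ?_⟩ (Set.toFinite _)
  · by_cases h : p.2 ∈ S <;> simp_all
  · simpa [hi] using hsub (show (u, i) ∈ {p : Fin m × Fin n | X p.1 p.2 ≠ 0} from hX)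

theorem stmt_0_general {m n : ℕ} (R : Matrix (Fin m) (Fin n) ℝ)
    (Umaj Umin : Finset (Fin m)) (Imaj Imin : Finset (Fin n))
    (hUunion : Umaj ∪ Umin = Finset.univ)
    (hcross : ∀ u i, ((u ∈ Umaj ∧ i ∈ Imin) ∨ (u ∈ Umin ∧ i ∈ Imaj)) → R u i = 0)
    (Ω : Finset (Fin m × Fin n))
    (hΩ : ∀ p ∈ Ω, p.1 ∈ Umin → p.2 ∈ Imin → R p.1 p.2 = 0)
    (X : Matrix (Fin m) (Fin n) ℝ)
    (hfeas : ∀ p ∈ Ω, X p.1 p.2 = R p.1 p.2)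
    (hopt : ∀ Y : Matrix (Fin m) (Fin n) ℝ,
      (∀ p ∈ Ω, Y p.1 p.2 = R p.1 p.2) → X.rank ≤ Y.rank)
    (hsparse : ∀ Y : Matrix (Fin m) (Fin n) ℝ,
      (∀ p ∈ Ω, Y p.1 p.2 = R p.1 p.2) →
      (∀ Z : Matrix (Fin m) (Fin n) ℝ,
        (∀ p ∈ Ω, Z p.1 p.2 = R p.1 p.2) → Y.rank ≤ Z.rank) →
      nnz X ≤ nnz Y) :
    ∀ u : Fin m, ∀ i ∈ Imin, X u i = 0 := by
  have hRΩ : ∀ p ∈ Ω, p.2 ∈ Imin → R p.1 p.2 = 0 := by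
    intro p hp hi
    have hu : p.1 ∈ Umaj ∪ Umin := hUunion ▸ Finset.mem_univ p.1
    rcases Finset.mem_union.mp hu with hmaj | hmin
    · exact hcross _ _ (Or.inl ⟨hmaj, hi⟩)
    · exact hΩ p hp hmin hi
  have hYfeas : ∀ p ∈ Ω, X.zeroColumns Imin p.1 p.2 = R p.1 p.2 := by
    intro p hp
    by_cases hi : p.2 ∈ Imin
    · simp [hi, hRΩ p hp hi]
    · simp [hi, hfeas p hp]
  have hYopt : ∀ Z : Matrix (Fin m) (Fin n) ℝ, (∀ p ∈ Ω, Z p.1 p.2 = R p.1 p.2) →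
      (X.zeroColumns Imin).rank ≤ Z.rank :=
    fun Z hZ => (X.rank_zeroColumns_le Imin).trans (hopt Z hZ)
  intro u i hi
  by_contra hX
  exact (nnz_zeroColumns_lt X hi hX).not_ge (hsparse _ hYfeas hYopt)

/-- The sparsest rank-minimizing completion of a majority-minority
matrix, when no nonzero minority-block entry is observed, vanishes on all
minority columns. -/
theorem stmt_0 {m n : ℕ} (R : Matrix (Fin m) (Fin n) ℝ)
    (Umaj Umin : Finset (Fin m)) (Imaj Imin : Finset (Fin n))
    (hUunion : Umaj ∪ Umin = Finset.univ) (hUdisj : Disjoint Umaj Umin)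
    (hIunion : Imaj ∪ Imin = Finset.univ) (hIdisj : Disjoint Imaj Imin)
    (hnonneg : ∀ u i, 0 ≤ R u i)
    (hnozero : ∀ u : Fin m, 0 < ∑ i, R u i)
    (hcross : ∀ u i, ((u ∈ Umaj ∧ i ∈ Imin) ∨ (u ∈ Umin ∧ i ∈ Imaj)) → R u i = 0)
    (Ω : Finset (Fin m × Fin n))
    (hΩ : ∀ p ∈ Ω, p.1 ∈ Umin → p.2 ∈ Imin → R p.1 p.2 = 0)
    (X : Matrix (Fin m) (Fin n) ℝ)
    (hfeas : ∀ p ∈ Ω, X p.1 p.2 = R p.1 p.2)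
    (hopt : ∀ Y : Matrix (Fin m) (Fin n) ℝ,
      (∀ p ∈ Ω, Y p.1 p.2 = R p.1 p.2) → X.rank ≤ Y.rank)
    (hsparse : ∀ Y : Matrix (Fin m) (Fin n) ℝ,
      (∀ p ∈ Ω, Y p.1 p.2 = R p.1 p.2) →
      (∀ Z : Matrix (Fin m) (Fin n) ℝ,
        (∀ p ∈ Ω, Z p.1 p.2 = R p.1 p.2) → Y.rank ≤ Z.rank) →
      nnz X ≤ nnz Y) :
    ∀ u : Fin m, ∀ i ∈ Imin, X u i = 0 :=
  stmt_0_general R Umaj Umin Imaj Imin hUunion hcross Ω hΩ X hfeas hopt hsparse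
end

section
/- If X̂ is a feasible optimal (rank-minimizing) solution to the matrix completion problem with observed set Ω satisfying the majority-minority observation condition, then the matrix X̂' obtained from X̂ by zeroing all entries outside the majority block (i.e., keeping X̂ restricted to rows in U_maj and columns in I_maj, zero elsewhere) is also feasible and achieves rank(X̂') ≤ rank(X̂), hence is also optimal. -/
/-!
Outside the majority block every observed entry of `R` is zero: cross-block entries of `R`
vanish identically, and observed minority entries vanish by assumption. So zeroing a feasible
completion outside the majority block keeps it feasible. The zeroed matrix is
`D_U * X * D_I` for the diagonal 0/1 projections onto the majority rows and columns, and
multiplying by a matrix does not increase rank.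
-/

namespace Matrix

variable {m n R : Type*}

def restrictBlock (p : m → Prop) (q : n → Prop) [DecidablePred p] [DecidablePred q]
    [Zero R] (A : Matrix m n R) : Matrix m n R :=
  of fun u i => if p u ∧ q i then A u i else 0

variable (p : m → Prop) (q : n → Prop) [DecidablePred p] [DecidablePred q]

theorem restrictBlock_eq_diagonal_mul_mul_diagonal [Fintype m] [Fintype n] [DecidableEq m]
    [DecidableEq n] [Semiring R] (A : Matrix m n R) :
    restrictBlock p q A =
      diagonal (fun u => if p u then (1 : R) else 0) * A *
        diagonal (fun i => if q i then (1 : R) else 0) := by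
  ext u i
  by_cases hu : p u <;> by_cases hi : q i <;> simp [restrictBlock, hu, hi]

theorem rank_restrictBlock_le [Fintype m] [Fintype n] [CommSemiring R] [StrongRankCondition R]
    (A : Matrix m n R) : (restrictBlock p q A).rank ≤ A.rank := by
  classical
  rw [restrictBlock_eq_diagonal_mul_mul_diagonal]
  exact (rank_mul_le_left _ _).trans (rank_mul_le_right _ _)

theorem restrictBlock_apply_eq_of_eqOn [Zero R] {Ω : Set (m × n)} {A B : Matrix m n R}
    (hAB : ∀ x ∈ Ω, A x.1 x.2 = B x.1 x.2)
    (hB : ∀ x ∈ Ω, ¬(p x.1 ∧ q x.2) → B x.1 x.2 = 0) :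
    ∀ x ∈ Ω, restrictBlock p q A x.1 x.2 = B x.1 x.2 := by
  intro x hx
  by_cases hpq : p x.1 ∧ q x.2
  · simp [restrictBlock, hpq, hAB x hx]
  · simp [restrictBlock, hpq, hB x hx hpq]

end Matrix

theorem stmt_1_general {m n : ℕ} (R : Matrix (Fin m) (Fin n) ℝ)
    (Umaj Umin : Finset (Fin m)) (Imaj Imin : Finset (Fin n))
    (hUunion : Umaj ∪ Umin = Finset.univ)
    (hIunion : Imaj ∪ Imin = Finset.univ)
    (hcross : ∀ u i, ((u ∈ Umaj ∧ i ∈ Imin) ∨ (u ∈ Umin ∧ i ∈ Imaj)) → R u i = 0)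
    (Ω : Finset (Fin m × Fin n))
    (hΩ : ∀ p ∈ Ω, p.1 ∈ Umin → p.2 ∈ Imin → R p.1 p.2 = 0)
    (X : Matrix (Fin m) (Fin n) ℝ)
    (hfeas : ∀ p ∈ Ω, X p.1 p.2 = R p.1 p.2)
    (X' : Matrix (Fin m) (Fin n) ℝ)
    (hX' : ∀ u i, X' u i = if u ∈ Umaj ∧ i ∈ Imaj then X u i else 0) :
    (∀ p ∈ Ω, X' p.1 p.2 = R p.1 p.2) ∧ X'.rank ≤ X.rank := by
  have hX'_eq : X' = Matrix.restrictBlock (· ∈ Umaj) (· ∈ Imaj) X := by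
    ext u i
    exact hX' u i
  have hR_outside : ∀ p ∈ Ω, ¬(p.1 ∈ Umaj ∧ p.2 ∈ Imaj) → R p.1 p.2 = 0 := by
    rintro ⟨u, i⟩ hp hout
    have hu : u ∈ Umaj ∪ Umin := hUunion ▸ Finset.mem_univ u
    have hi : i ∈ Imaj ∪ Imin := hIunion ▸ Finset.mem_univ i
    rcases Finset.mem_union.mp hu with hu | hu <;> rcases Finset.mem_union.mp hi with hi | hi
    · exact absurd ⟨hu, hi⟩ hout
    · exact hcross u i (Or.inl ⟨hu, hi⟩)
    · exact hcross u i (Or.inr ⟨hu, hi⟩)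
    · exact hΩ _ hp hu hi
  rw [hX'_eq]
  exact ⟨fun x hx => Matrix.restrictBlock_apply_eq_of_eqOn _ _ (Ω := ↑Ω) hfeas hR_outside x hx,
    Matrix.rank_restrictBlock_le _ _ X⟩

/-- zeroing everything outside the majority block of a feasible
rank-minimizing completion yields a feasible completion of rank at most the
original rank (hence also optimal). -/
theorem stmt_1 {m n : ℕ} (R : Matrix (Fin m) (Fin n) ℝ)
    (Umaj Umin : Finset (Fin m)) (Imaj Imin : Finset (Fin n))
    (hUunion : Umaj ∪ Umin = Finset.univ) (hUdisj : Disjoint Umaj Umin)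
    (hIunion : Imaj ∪ Imin = Finset.univ) (hIdisj : Disjoint Imaj Imin)
    (hnonneg : ∀ u i, 0 ≤ R u i)
    (hcross : ∀ u i, ((u ∈ Umaj ∧ i ∈ Imin) ∨ (u ∈ Umin ∧ i ∈ Imaj)) → R u i = 0)
    (Ω : Finset (Fin m × Fin n))
    (hΩ : ∀ p ∈ Ω, p.1 ∈ Umin → p.2 ∈ Imin → R p.1 p.2 = 0)
    (X : Matrix (Fin m) (Fin n) ℝ)
    (hfeas : ∀ p ∈ Ω, X p.1 p.2 = R p.1 p.2)
    (hopt : ∀ Y : Matrix (Fin m) (Fin n) ℝ,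
      (∀ p ∈ Ω, Y p.1 p.2 = R p.1 p.2) → X.rank ≤ Y.rank)
    (X' : Matrix (Fin m) (Fin n) ℝ)
    (hX' : ∀ u i, X' u i = if u ∈ Umaj ∧ i ∈ Imaj then X u i else 0) :
    (∀ p ∈ Ω, X' p.1 p.2 = R p.1 p.2) ∧ X'.rank ≤ X.rank :=
  stmt_1_general R Umaj Umin Imaj Imin hUunion hIunion hcross Ω hΩ X hfeas X' hX'
end

section
/- Let M ∈ ℝ^{d×d} be positive semi-definite with rank k ≤ d and eigenvalues λ₁ ≥ ... ≥ λ_d. For a ∈ ℝ^d and c ∈ ℝ, let A be the (d+1)×(d+1) block matrix with top-left entry c, top-right row a^T, bottom-left column a, and bottom-right block M. Then λ_{k+1}(A) ≥ min(c, λ_k) − ‖a‖₂. -/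
open Matrix Finset
open scoped RealInnerProductSpace

/-!
By the max–min (Courant–Fischer) characterisation, `λ_{k+1}(A) ≥ μ` as soon as `xᵀ A x ≥ μ ‖x‖²`
on some `(k+1)`-dimensional subspace. Take the span of the first coordinate vector and of the top
`k` eigenvectors of `M`. On a vector `(r, y)` of it,
`xᵀ A x = c r² + 2 r ⟪a, y⟫ + yᵀ M y ≥ min(c, λ_k) (r² + ‖y‖²) - 2 |r| ‖a‖ ‖y‖`,
and `2 |r| ‖y‖ ≤ r² + ‖y‖²`.
-/

/-- `sortedEig M hM k` is the `k`-th largest eigenvalue (1-indexed) of the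
Hermitian matrix `M`. -/
noncomputable def sortedEig {d : ℕ} (M : Matrix (Fin d) (Fin d) ℝ)
    (hM : M.IsHermitian) (k : ℕ) : ℝ :=
  if h : k - 1 < d then
    ((hM.eigenvalues ∘ Tuple.sort hM.eigenvalues) (Fin.rev ⟨k - 1, h⟩))
  else 0

namespace Tuple
variable {α : Type*} [LinearOrder α] {n : ℕ}

theorem le_card_filter_le_comp_sort (f : Fin n → α) (j : Fin n) :
    (j : ℕ) + 1 ≤ #{i | f i ≤ f (sort f j)} := by
  calc (j : ℕ) + 1 = #((Finset.Iic j).image (sort f)) := by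
        rw [Finset.card_image_of_injective _ (sort f).injective, Fin.card_Iic]
    _ ≤ _ := Finset.card_le_card fun i hi => by
        obtain ⟨l, hl, rfl⟩ := Finset.mem_image.mp hi
        simpa using monotone_sort f (Finset.mem_Iic.mp hl)

theorem le_card_filter_comp_sort_le (f : Fin n → α) (j : Fin n) :
    n - j ≤ #{i | f (sort f j) ≤ f i} := by
  calc n - j = #((Finset.Ici j).image (sort f)) := by
        rw [Finset.card_image_of_injective _ (sort f).injective, Fin.card_Ici]
    _ ≤ _ := Finset.card_le_card fun i hi => by
        obtain ⟨l, hl, rfl⟩ := Finset.mem_image.mp hi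
        simpa using monotone_sort f (Finset.mem_Ici.mp hl)

end Tuple

theorem sortedEig_eq_eigenvalues_sort {n : ℕ} {A : Matrix (Fin n) (Fin n) ℝ}
    (hA : A.IsHermitian) {j : ℕ} (hj₀ : 1 ≤ j) (hj : j ≤ n) :
    sortedEig A hA j = hA.eigenvalues (Tuple.sort hA.eigenvalues ⟨n - j, by omega⟩) := by
  rw [sortedEig, dif_pos (by omega), Function.comp_apply]
  congr 2
  exact Fin.ext (by simp only [Fin.val_rev]; omega)

theorem Orthonormal.inner_eq_zero_of_mem_span {ι 𝕜 E : Type*} [RCLike 𝕜] [NormedAddCommGroup E]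
    [InnerProductSpace 𝕜 E] {v : ι → E} (hv : Orthonormal 𝕜 v) {s : Set ι} {x : E}
    (hx : x ∈ Submodule.span 𝕜 (v '' s)) {i : ι} (hi : i ∉ s) : inner 𝕜 x (v i) = 0 := by
  obtain ⟨l, hl, rfl⟩ := (Finsupp.mem_span_image_iff_linearCombination 𝕜).mp hx
  exact hv.inner_finsupp_eq_zero hi hl

theorem OrthonormalBasis.finrank_span_image {ι 𝕜 E : Type*} [Fintype ι] [RCLike 𝕜]
    [NormedAddCommGroup E] [InnerProductSpace 𝕜 E] (b : OrthonormalBasis ι 𝕜 E) (s : Finset ι) :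
    Module.finrank 𝕜 (Submodule.span 𝕜 (b '' s)) = #s := by
  classical
  have hb := b.orthonormal.linearIndependent
  rw [← Finset.coe_image, finrank_span_finset_eq_card, card_image_of_injective _ hb.injective]
  rw [Finset.coe_image]
  exact (hb.linearIndepOn _).id_image

namespace Matrix.IsHermitian

section
variable {n : Type*} [Fintype n] [DecidableEq n] {A : Matrix n n ℝ} (hA : A.IsHermitian)

theorem inner_eigenvectorBasis_toLp_mulVec (x : EuclideanSpace ℝ n) (i : n) :
    ⟪hA.eigenvectorBasis i, WithLp.toLp 2 (A *ᵥ x)⟫ =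
      hA.eigenvalues i * ⟪hA.eigenvectorBasis i, x⟫ := by
  have := (isSymmetric_toEuclideanLin_iff.mpr hA) (hA.eigenvectorBasis i) x
  simp only [toLpLin_apply] at this
  rw [← this, hA.mulVec_eigenvectorBasis]
  exact real_inner_smul_left _ _ _

theorem dotProduct_mulVec_eq_sum (x : EuclideanSpace ℝ n) :
    x ⬝ᵥ A *ᵥ x = ∑ i, hA.eigenvalues i * ⟪hA.eigenvectorBasis i, x⟫ ^ 2 := by
  have hinner : x ⬝ᵥ A *ᵥ x = ⟪x, WithLp.toLp 2 (A *ᵥ x)⟫ := by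
    rw [EuclideanSpace.inner_eq_star_dotProduct, star_trivial, dotProduct_comm]
  rw [hinner, ← hA.eigenvectorBasis.sum_inner_mul_inner]
  refine Finset.sum_congr rfl fun i _ => ?_
  rw [inner_eigenvectorBasis_toLp_mulVec, real_inner_comm]
  ring

theorem dotProduct_mulVec_le_of_mem_span {s : Set n} {t : ℝ}
    (hs : ∀ i ∈ s, hA.eigenvalues i ≤ t) {x : EuclideanSpace ℝ n}
    (hx : x ∈ Submodule.span ℝ (hA.eigenvectorBasis '' s)) :
    x ⬝ᵥ A *ᵥ x ≤ t * ‖x‖ ^ 2 := by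
  rw [hA.dotProduct_mulVec_eq_sum, ← hA.eigenvectorBasis.sum_sq_inner_right, Finset.mul_sum]
  refine Finset.sum_le_sum fun i _ => ?_
  by_cases hi : i ∈ s
  · exact mul_le_mul_of_nonneg_right (hs i hi) (sq_nonneg _)
  · simp [real_inner_comm, hA.eigenvectorBasis.orthonormal.inner_eq_zero_of_mem_span hx hi]

theorem mul_le_dotProduct_mulVec_of_mem_span {s : Set n} {t : ℝ}
    (hs : ∀ i ∈ s, t ≤ hA.eigenvalues i) {x : EuclideanSpace ℝ n}
    (hx : x ∈ Submodule.span ℝ (hA.eigenvectorBasis '' s)) :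
    t * ‖x‖ ^ 2 ≤ x ⬝ᵥ A *ᵥ x := by
  rw [hA.dotProduct_mulVec_eq_sum, ← hA.eigenvectorBasis.sum_sq_inner_right, Finset.mul_sum]
  refine Finset.sum_le_sum fun i _ => ?_
  by_cases hi : i ∈ s
  · exact mul_le_mul_of_nonneg_right (hs i hi) (sq_nonneg _)
  · simp [real_inner_comm, hA.eigenvectorBasis.orthonormal.inner_eq_zero_of_mem_span hx hi]

end

section
variable {n : ℕ} {A : Matrix (Fin n) (Fin n) ℝ} (hA : A.IsHermitian)

theorem le_sortedEig_of_le_finrank {j : ℕ} (hj : 1 ≤ j)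
    {V : Submodule ℝ (EuclideanSpace ℝ (Fin n))} (hV : j ≤ Module.finrank ℝ V) {μ : ℝ}
    (hμ : ∀ x ∈ V, μ * ‖x‖ ^ 2 ≤ x ⬝ᵥ A *ᵥ x) :
    μ ≤ sortedEig A hA j := by
  have hjn : j ≤ n := hV.trans ((Submodule.finrank_le V).trans_eq finrank_euclideanSpace_fin)
  by_contra! hlt
  set S : Finset (Fin n) := {i | hA.eigenvalues i ≤ sortedEig A hA j}
  have hS : n - j + 1 ≤ #S := by
    simpa only [S, sortedEig_eq_eigenvalues_sort hA hj hjn] using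
      Tuple.le_card_filter_le_comp_sort hA.eigenvalues ⟨n - j, by omega⟩
  have hdisj : Disjoint V (Submodule.span ℝ (hA.eigenvectorBasis '' S)) := by
    refine Submodule.disjoint_def.mpr fun x hxV hxW => ?_
    have hle := (hμ x hxV).trans <| hA.dotProduct_mulVec_le_of_mem_span
      (fun i hi => (Finset.mem_filter.mp hi).2) hxW
    have : ‖x‖ ^ 2 ≤ 0 := by nlinarith
    simpa using le_antisymm this (sq_nonneg _)
  have := Submodule.finrank_add_finrank_le_of_disjoint hdisj
  rw [hA.eigenvectorBasis.finrank_span_image, finrank_euclideanSpace_fin] at this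
  omega

theorem exists_le_finrank_sortedEig_mul_le {j : ℕ} (hj : j ≤ n) :
    ∃ U : Submodule ℝ (EuclideanSpace ℝ (Fin n)), j ≤ Module.finrank ℝ U ∧
      ∀ y ∈ U, sortedEig A hA j * ‖y‖ ^ 2 ≤ y ⬝ᵥ A *ᵥ y := by
  rcases Nat.eq_zero_or_pos j with rfl | hj₀
  · exact ⟨⊥, by simp, fun y hy => by simp [(Submodule.mem_bot ℝ).mp hy]⟩
  set S : Finset (Fin n) := {i | sortedEig A hA j ≤ hA.eigenvalues i}
  refine ⟨Submodule.span ℝ (hA.eigenvectorBasis '' S), ?_, fun y hy =>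
    hA.mul_le_dotProduct_mulVec_of_mem_span (fun i hi => (Finset.mem_filter.mp hi).2) hy⟩
  rw [hA.eigenvectorBasis.finrank_span_image]
  simp only [S, sortedEig_eq_eigenvalues_sort hA hj₀ hj]
  calc j = n - (n - j) := by omega
    _ ≤ _ := Tuple.le_card_filter_comp_sort_le hA.eigenvalues ⟨n - j, by omega⟩

end

end Matrix.IsHermitian

theorem EuclideanSpace.real_norm_sq_eq_dotProduct {n : Type*} [Fintype n]
    (x : EuclideanSpace ℝ n) : ‖x‖ ^ 2 = x ⬝ᵥ x := by
  rw [← real_inner_self_eq_norm_sq, EuclideanSpace.inner_eq_star_dotProduct, star_trivial]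

theorem EuclideanSpace.abs_dotProduct_le {n : Type*} [Fintype n] (a : n → ℝ)
    (y : EuclideanSpace ℝ n) : |a ⬝ᵥ y| ≤ √(∑ i, a i ^ 2) * ‖y‖ := by
  have h := abs_real_inner_le_norm (WithLp.toLp 2 a) y
  rw [EuclideanSpace.inner_eq_star_dotProduct, star_trivial, dotProduct_comm,
    EuclideanSpace.norm_eq] at h
  simpa using h

section Bordered
variable {d : ℕ}

def borderedMatrix (c : ℝ) (a : Fin d → ℝ) (M : Matrix (Fin d) (Fin d) ℝ) :
    Matrix (Fin (1 + d)) (Fin (1 + d)) ℝ :=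
  Matrix.reindex finSumFinEquiv finSumFinEquiv
    (Matrix.fromBlocks (Matrix.of fun (_ : Fin 1) (_ : Fin 1) => c)
      (Matrix.of fun (_ : Fin 1) (j : Fin d) => a j)
      (Matrix.of fun (i : Fin d) (_ : Fin 1) => a i) M)

def borderedVec (d : ℕ) : ℝ × EuclideanSpace ℝ (Fin d) →ₗ[ℝ] EuclideanSpace ℝ (Fin (1 + d)) where
  toFun p := WithLp.toLp 2 (Sum.elim (fun _ => p.1) p.2 ∘ finSumFinEquiv.symm)
  map_add' p q := by
    ext i
    cases h : finSumFinEquiv.symm i <;> simp [h]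
  map_smul' r p := by
    ext i
    cases h : finSumFinEquiv.symm i <;> simp [h]

theorem ofLp_borderedVec (r : ℝ) (y : EuclideanSpace ℝ (Fin d)) :
    (borderedVec d (r, y)).ofLp = Sum.elim (fun _ => r) y ∘ finSumFinEquiv.symm := rfl

theorem borderedVec_injective : Function.Injective (borderedVec d) := by
  rintro ⟨r, y⟩ ⟨s, z⟩ h
  have := congrArg (fun v : EuclideanSpace ℝ (Fin (1 + d)) => v.ofLp ∘ finSumFinEquiv) h
  simp only [ofLp_borderedVec, Function.comp_assoc, Equiv.symm_comp_self, Function.comp_id] at this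
  exact Prod.ext (congrFun this (.inl 0))
    (WithLp.ofLp_injective 2 (funext fun i => congrFun this (.inr i)))

theorem norm_borderedVec_sq (r : ℝ) (y : EuclideanSpace ℝ (Fin d)) :
    ‖borderedVec d (r, y)‖ ^ 2 = r ^ 2 + ‖y‖ ^ 2 := by
  rw [EuclideanSpace.real_norm_sq_eq_dotProduct, EuclideanSpace.real_norm_sq_eq_dotProduct,
    ofLp_borderedVec, dotProduct_comp_equiv_symm, Function.comp_assoc, Equiv.symm_comp_self,
    Function.comp_id, sumElim_dotProduct_sumElim]
  simp [dotProduct, sq]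

theorem borderedVec_dotProduct_borderedMatrix_mulVec (c : ℝ) (a : Fin d → ℝ)
    (M : Matrix (Fin d) (Fin d) ℝ) (r : ℝ) (y : EuclideanSpace ℝ (Fin d)) :
    borderedVec d (r, y) ⬝ᵥ borderedMatrix c a M *ᵥ borderedVec d (r, y) =
      c * r ^ 2 + 2 * r * (a ⬝ᵥ y) + y ⬝ᵥ M *ᵥ y := by
  simp only [borderedMatrix, reindex_apply, ofLp_borderedVec, submatrix_mulVec_equiv,
    Equiv.symm_symm, Function.comp_assoc, Equiv.symm_comp_self, Function.comp_id,
    dotProduct_comp_equiv_symm, fromBlocks_mulVec, sumElim_dotProduct_sumElim]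
  have hc : (of fun _ _ => c : Matrix (Fin 1) (Fin 1) ℝ) *ᵥ (fun _ => r) = fun _ => c * r := by
    ext; simp [mulVec, dotProduct]
  have hrow : (of fun _ j => a j : Matrix (Fin 1) (Fin d) ℝ) *ᵥ y = fun _ => a ⬝ᵥ y := rfl
  have hcol : (of fun i _ => a i : Matrix (Fin d) (Fin 1) ℝ) *ᵥ (fun _ => r) = r • a := by
    ext; simp [mulVec, dotProduct, mul_comm]
  simp only [Sum.elim_comp_inl, Sum.elim_comp_inr, hc, hrow, hcol, dotProduct_add,
    dotProduct_smul, dotProduct_comm y.ofLp a]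
  simp only [dotProduct, Fin.sum_univ_one, smul_eq_mul]
  ring

end Bordered

theorem min_sub_mul_add_sq_le {c s α p q r ν : ℝ} (hp : |p| ≤ α * ν) (hq : s * ν ^ 2 ≤ q)
    (hα : 0 ≤ α) : (min c s - α) * (r ^ 2 + ν ^ 2) ≤ c * r ^ 2 + 2 * r * p + q := by
  have hc : min c s * r ^ 2 ≤ c * r ^ 2 :=
    mul_le_mul_of_nonneg_right (min_le_left _ _) (sq_nonneg r)
  have hs : min c s * ν ^ 2 ≤ q :=
    (mul_le_mul_of_nonneg_right (min_le_right _ _) (sq_nonneg ν)).trans hq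
  have hrp : 2 * |r| * |p| ≤ α * (r ^ 2 + ν ^ 2) := by
    nlinarith [mul_nonneg hα (sq_nonneg (|r| - ν)), sq_abs r, abs_nonneg r]
  have hcross : -(2 * |r| * |p|) ≤ 2 * r * p := by
    have := neg_abs_le (2 * r * p)
    rwa [abs_mul, abs_mul, abs_two] at this
  nlinarith

theorem stmt_6_general {d : ℕ} (M : Matrix (Fin d) (Fin d) ℝ)
    (hPSD : M.PosSemidef) (k : ℕ) (hk : k ≤ d)
    (a : Fin d → ℝ) (c : ℝ)
    (A : Matrix (Fin (1 + d)) (Fin (1 + d)) ℝ)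
    (hA : A = Matrix.reindex finSumFinEquiv finSumFinEquiv
      (Matrix.fromBlocks (Matrix.of fun (_ : Fin 1) (_ : Fin 1) => c)
        (Matrix.of fun (_ : Fin 1) (j : Fin d) => a j)
        (Matrix.of fun (i : Fin d) (_ : Fin 1) => a i) M))
    (hAH : A.IsHermitian) :
    min c (sortedEig M hPSD.isHermitian k) - Real.sqrt (∑ i, (a i) ^ 2) ≤
      sortedEig A hAH (k + 1) := by
  obtain ⟨U, hUk, hU⟩ := hPSD.isHermitian.exists_le_finrank_sortedEig_mul_le hk
  set φ := borderedVec d ∘ₗ LinearMap.prodMap LinearMap.id U.subtype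
  have hφ : Function.Injective φ :=
    borderedVec_injective.comp (Function.injective_id.prodMap U.injective_subtype)
  refine hAH.le_sortedEig_of_le_finrank (V := LinearMap.range φ) (by omega) ?_ ?_
  · rw [LinearMap.finrank_range_of_inj hφ, Module.finrank_prod, Module.finrank_self]
    omega
  · rintro _ ⟨⟨r, y⟩, rfl⟩
    rw [show A = borderedMatrix c a M from hA]
    simp only [φ, LinearMap.comp_apply, LinearMap.prodMap_apply, LinearMap.id_apply,
      Submodule.subtype_apply, borderedVec_dotProduct_borderedMatrix_mulVec, norm_borderedVec_sq]
    exact min_sub_mul_add_sq_le (EuclideanSpace.abs_dotProduct_le a y) (hU y y.2)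
      (Real.sqrt_nonneg _)

/-- Chrétien–Darses, Cor. 3.5: appending a row/column
(c, aᵀ; a, M) to a PSD matrix M of rank k gives
λ_{k+1}(A) ≥ min(c, λ_k(M)) − ‖a‖₂. -/
theorem stmt_6 {d : ℕ} (M : Matrix (Fin d) (Fin d) ℝ)
    (hPSD : M.PosSemidef) (k : ℕ) (hk : k ≤ d) (hrank : M.rank = k)
    (a : Fin d → ℝ) (c : ℝ)
    (A : Matrix (Fin (1 + d)) (Fin (1 + d)) ℝ)
    (hA : A = Matrix.reindex finSumFinEquiv finSumFinEquiv
      (Matrix.fromBlocks (Matrix.of fun (_ : Fin 1) (_ : Fin 1) => c)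
        (Matrix.of fun (_ : Fin 1) (j : Fin d) => a j)
        (Matrix.of fun (i : Fin d) (_ : Fin 1) => a i) M))
    (hAH : A.IsHermitian) :
    min c (sortedEig M hPSD.isHermitian k) - Real.sqrt (∑ i, (a i) ^ 2) ≤
      sortedEig A hAH (k + 1) :=
  stmt_6_general M hPSD k hk a c A hA hAH
end

section
/- Let R ∈ [0,1]^{m×n}, fix n̄ with σ_{n̄}(R'(n̄)) > 0, where R'(n̄) zeroes all columns after n̄. Let Π* be the rank-n̄ orthogonal projection (onto top right-singular subspace of R) achieving the best rank-n̄ approximation R·Π* of R, and let I_{n,n̄} be the diagonal 0/1 matrix with ones in the first n̄ diagonal positions. Then ‖Π* − I_{n,n̄}‖_F ≤ 2√2·n·κ / σ_{n̄}(R'(n̄))², where κ = max_{i > n̄} ‖R_i‖₁. -/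
open Matrix

theorem Matrix.isHermitian_transpose_mul_self {m n : ℕ} (A : Matrix (Fin m) (Fin n) ℝ) :
    (Aᵀ * A).IsHermitian := by
  simpa [Matrix.conjTranspose_eq_transpose_of_trivial] using
    Matrix.isHermitian_conjTranspose_mul_self A

noncomputable def sortedSV {m n : ℕ} (A : Matrix (Fin m) (Fin n) ℝ) (k : ℕ) : ℝ :=
  if h : k - 1 < n then
    Real.sqrt (((Matrix.isHermitian_transpose_mul_self A).eigenvalues ∘
      Tuple.sort (Matrix.isHermitian_transpose_mul_self A).eigenvalues)
      (Fin.rev ⟨k - 1, h⟩))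
  else 0

noncomputable def frob {m n : ℕ} (A : Matrix (Fin m) (Fin n) ℝ) : ℝ :=
  Real.sqrt (∑ u, ∑ i, (A u i) ^ 2)

/-
Davis–Kahan in trace form. Put `C = RᵀR`, `E = I_{n,n̄}` and `C' = R'ᵀR'`, so `R' = R E` and
`E C' = C'`. Since `rank C' ≤ n̄` and `δ = σ_{n̄}(R')² > 0`, `C'` has exactly `n̄` nonzero
eigenvalues, all `≥ δ`; hence the projection onto the range of `C'` is `E` and `C' ⪰ δ E`.
Comparing `P` with the rank-`n̄` competitor `R E` gives `tr(E C) ≤ tr(P C)`. With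
`F = ‖P - E‖_F` one has `F² = 2 (n̄ - tr(P E))`, and
`δ F² / 2 ≤ tr((E - P) C') ≤ tr((E - P) (C' - C)) ≤ F ‖C' - C‖_F ≤ F n κ`,
because every entry of `C' - C` is bounded by `κ`. So in fact `F ≤ 2 n κ / δ`.
-/

open Finset

theorem Tuple.card_eq_and_sort_le_of_ne_zero {α : Type*} [LinearOrder α] [Zero α] {n : ℕ}
    {f : Fin n → α} {p : Fin n} (hp : 0 < f (Tuple.sort f p))
    (hcard : #{j | f j ≠ 0} ≤ n - p) :
    #{j | f j ≠ 0} = n - p ∧ ∀ j, f j ≠ 0 → f (Tuple.sort f p) ≤ f j := by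
  have hsupp : (Ici p).map (Tuple.sort f).toEmbedding = ({j | f j ≠ 0} : Finset (Fin n)) := by
    refine eq_of_subset_of_card_le (fun j hj => ?_) (by rwa [card_map, Fin.card_Ici])
    obtain ⟨q, hq, rfl⟩ := mem_map.mp hj
    exact mem_filter.mpr ⟨mem_univ _,
      (hp.trans_le (Tuple.monotone_sort f (mem_Ici.mp hq))).ne'⟩
  refine ⟨by rw [← hsupp, card_map, Fin.card_Ici], fun j hj => ?_⟩
  obtain ⟨q, hq, rfl⟩ := mem_map.mp (hsupp ▸ mem_filter.mpr ⟨mem_univ j, hj⟩)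
  exact Tuple.monotone_sort f (mem_Ici.mp hq)

theorem rank_transpose_mul_self_eq_and_sortedSV_sq_le {m n k : ℕ} {A : Matrix (Fin m) (Fin n) ℝ}
    (hrank : A.rank ≤ k) (hσ : 0 < sortedSV A k) :
    (Aᵀ * A).rank = k ∧ ∀ j, (isHermitian_transpose_mul_self A).eigenvalues j ≠ 0 →
      sortedSV A k ^ 2 ≤ (isHermitian_transpose_mul_self A).eigenvalues j := by
  have hk1 : k - 1 < n := by
    by_contra h
    simp [sortedSV, h] at hσ
  set hA := isHermitian_transpose_mul_self A
  set p : Fin n := Fin.rev ⟨k - 1, hk1⟩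
  have hsq : sortedSV A k ^ 2 = hA.eigenvalues (Tuple.sort hA.eigenvalues p) := by
    rw [sortedSV, dif_pos hk1] at hσ ⊢
    exact Real.sq_sqrt (Real.sqrt_pos.mp hσ).le
  have hp : k ≤ n - p := by
    simp only [p, Fin.val_rev]
    omega
  have hcard : #{j | hA.eigenvalues j ≠ 0} ≤ k := by
    rw [← Fintype.card_subtype, ← hA.rank_eq_card_non_zero_eigs]
    exact (rank_mul_le_right _ _).trans hrank
  obtain ⟨hcard_eq, hle⟩ :=
    Tuple.card_eq_and_sort_le_of_ne_zero (hsq ▸ pow_pos hσ 2) (hcard.trans hp)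
  refine ⟨?_, hsq ▸ hle⟩
  rw [hA.rank_eq_card_non_zero_eigs, Fintype.card_subtype]
  omega

namespace Matrix

variable {ι : Type*} [Fintype ι]

theorem trace_mul_nonneg_of_posSemidef {S D : Matrix ι ι ℝ} (hS : Sᵀ = S) (hSS : S * S = S)
    (hD : D.PosSemidef) : 0 ≤ (S * D).trace := by
  have h := (hD.conjTranspose_mul_mul_same S).trace_nonneg
  rwa [conjTranspose_eq_transpose_of_trivial, hS, trace_mul_cycle, hSS] at h

variable [DecidableEq ι]

theorem trace_eq_rank_of_isIdempotentElem {K : Type*} [Field K] {P : Matrix ι ι K}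
    (hP : IsIdempotentElem P) : P.trace = P.rank := by
  have hP' : IsIdempotentElem (toLin' P) := hP.map toLinAlgEquiv'
  rw [← trace_toLin'_eq, ((LinearMap.isProj_range_iff_isIdempotentElem _).mpr hP').trace]
  rfl

theorem eq_of_mul_eq_of_trace_eq {K : Type*} [Field K] [CharZero K]
    {E Q : Matrix ι ι K} (hE : IsIdempotentElem E) (hQ : IsIdempotentElem Q)
    (hEQ : E * Q = Q) (hQE : Q * E = Q) (htrace : Q.trace = E.trace) : Q = E := by
  have hdiff : IsIdempotentElem (E - Q) := by
    simp only [IsIdempotentElem, sub_mul, mul_sub, hE.eq, hQ.eq, hEQ, hQE]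
    abel
  have hdiff' : IsIdempotentElem (toLin' (E - Q)) := hdiff.map toLinAlgEquiv'
  have htrace' : LinearMap.trace K _ (toLin' (E - Q)) = 0 := by
    rw [trace_toLin'_eq, trace_sub, htrace, sub_self]
  exact (sub_eq_zero.mp (toLin'.map_eq_zero_iff.mp
    (LinearMap.IsIdempotentElem.eq_zero_of_trace_eq_zero hdiff' htrace'))).symm

-- `x * x⁻¹` is the indicator of `x ≠ 0` (recall `0⁻¹ = 0`): this is the orthogonal projection
-- onto the range of a symmetric `A`.
noncomputable def supportProj (A : Matrix ι ι ℝ) : Matrix ι ι ℝ :=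
  cfc (fun x : ℝ => x * x⁻¹) A

lemma continuousOn_spectrum (A : Matrix ι ι ℝ) (f : ℝ → ℝ) : ContinuousOn f (spectrum ℝ A) :=
  A.finite_spectrum.continuousOn f

lemma isSelfAdjoint_supportProj (A : Matrix ι ι ℝ) : IsSelfAdjoint A.supportProj :=
  cfc_predicate _ _

lemma isIdempotentElem_supportProj (A : Matrix ι ι ℝ) : IsIdempotentElem A.supportProj := by
  rw [IsIdempotentElem, supportProj,
    ← cfc_mul _ _ A (A.continuousOn_spectrum _) (A.continuousOn_spectrum _)]
  refine cfc_congr fun x _ => ?_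
  by_cases hx : x = 0 <;> simp [hx]

lemma supportProj_eq_mul {A : Matrix ι ι ℝ} (hA : A.IsHermitian) :
    A.supportProj = A * cfc (fun x : ℝ => x⁻¹) A := by
  rw [supportProj, cfc_mul _ _ A (A.continuousOn_spectrum _) (A.continuousOn_spectrum _),
    cfc_id' ℝ A]

lemma trace_supportProj {A : Matrix ι ι ℝ} (hA : A.IsHermitian) :
    A.supportProj.trace = A.rank := by
  rw [supportProj, hA.cfc_eq, IsHermitian.cfc, trace_map', trace_diagonal,
    hA.rank_eq_card_non_zero_eigs, Fintype.card_subtype, card_filter]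
  push_cast
  refine sum_congr rfl fun i _ => ?_
  by_cases h : hA.eigenvalues i = 0 <;> simp [h]

open scoped MatrixOrder in
lemma posSemidef_sub_smul_supportProj {A : Matrix ι ι ℝ} (hA : A.IsHermitian) {δ : ℝ}
    (hδ : ∀ i, hA.eigenvalues i ≠ 0 → δ ≤ hA.eigenvalues i) :
    (A - δ • A.supportProj).PosSemidef := by
  have hcfc : A - δ • A.supportProj = cfc (fun x : ℝ => x - δ * (x * x⁻¹)) A := by
    rw [cfc_sub _ _ A (A.continuousOn_spectrum _) (A.continuousOn_spectrum _),
      cfc_const_mul _ _ A (A.continuousOn_spectrum _), cfc_id' ℝ A, supportProj]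
  rw [← nonneg_iff_posSemidef, hcfc]
  refine cfc_nonneg fun x hx => ?_
  obtain ⟨i, rfl⟩ := hA.spectrum_real_eq_range_eigenvalues ▸ hx
  by_cases h : hA.eigenvalues i = 0
  · simp [h]
  · simpa [h] using hδ i h

theorem posSemidef_sub_smul_of_mul_eq {A E : Matrix ι ι ℝ} (hA : A.IsHermitian) (hEsymm : Eᵀ = E)
    (hEidem : IsIdempotentElem E) (hEA : E * A = A) (htrace : E.trace = A.rank) {δ : ℝ}
    (hδ : ∀ i, hA.eigenvalues i ≠ 0 → δ ≤ hA.eigenvalues i) : (A - δ • E).PosSemidef := by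
  have hEQ : E * A.supportProj = A.supportProj := by
    rw [supportProj_eq_mul hA, ← mul_assoc, hEA]
  have hQE : A.supportProj * E = A.supportProj := by
    simpa [star_mul, (isSelfAdjoint_supportProj A).star_eq, star_eq_conjTranspose,
      conjTranspose_eq_transpose_of_trivial, hEsymm] using congrArg star hEQ
  rw [← eq_of_mul_eq_of_trace_eq hEidem (isIdempotentElem_supportProj A) hEQ hQE
    (by rw [trace_supportProj hA, htrace])]
  exact posSemidef_sub_smul_supportProj hA hδ

end Matrix

section Frobenius

variable {m n : ℕ}

lemma frob_nonneg (A : Matrix (Fin m) (Fin n) ℝ) : 0 ≤ frob A :=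
  Real.sqrt_nonneg _

lemma frob_sq (A : Matrix (Fin m) (Fin n) ℝ) : frob A ^ 2 = (Aᵀ * A).trace := by
  rw [frob, Real.sq_sqrt (by positivity), trace, sum_comm]
  simp [mul_apply, sq]

lemma frob_sub_comm (A B : Matrix (Fin m) (Fin n) ℝ) : frob (A - B) = frob (B - A) := by
  simp only [frob, Matrix.sub_apply, sub_sq_comm (A _ _)]

lemma trace_mul_le_frob (A : Matrix (Fin m) (Fin n) ℝ) (B : Matrix (Fin n) (Fin m) ℝ) :
    (A * B).trace ≤ frob A * frob B := by
  calc (A * B).trace = ∑ p : Fin m × Fin n, A p.1 p.2 * B p.2 p.1 := by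
        simp [trace, mul_apply, Fintype.sum_prod_type]
    _ ≤ √(∑ p : Fin m × Fin n, A p.1 p.2 ^ 2) * √(∑ p : Fin m × Fin n, B p.2 p.1 ^ 2) :=
        Real.sum_mul_le_sqrt_mul_sqrt _ _ _
    _ = frob A * frob B := by
        rw [Fintype.sum_prod_type, Fintype.sum_prod_type_right]; rfl

lemma frob_le_of_abs_le {A : Matrix (Fin m) (Fin n) ℝ} {c : ℝ} (hc : 0 ≤ c)
    (h : ∀ i j, |A i j| ≤ c) : frob A ≤ √(m * n) * c := by
  calc frob A ≤ √(∑ _u : Fin m, ∑ _i : Fin n, c ^ 2) :=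
        Real.sqrt_le_sqrt <| sum_le_sum fun u _ => sum_le_sum fun i _ =>
          sq_le_sq' (abs_le.mp (h u i)).1 (abs_le.mp (h u i)).2
    _ = √(m * n) * c := by
        simp [Real.sqrt_mul' _ (sq_nonneg c), Real.sqrt_sq hc, mul_assoc]

lemma frob_sq_sub_mul (A : Matrix (Fin m) (Fin n) ℝ) {S : Matrix (Fin n) (Fin n) ℝ}
    (hS : Sᵀ = S) (hSS : S * S = S) :
    frob (A - A * S) ^ 2 = (Aᵀ * A).trace - (S * (Aᵀ * A)).trace := by
  have h1S : (1 - S)ᵀ = 1 - S := by rw [transpose_sub, transpose_one, hS]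
  have h1SS : (1 - S) * (1 - S) = 1 - S := by simp [sub_mul, mul_sub, hSS]
  rw [show A - A * S = A * (1 - S) by rw [Matrix.mul_sub, Matrix.mul_one], frob_sq,
    transpose_mul, h1S, show (1 - S) * Aᵀ * (A * (1 - S)) = (1 - S) * (Aᵀ * A) * (1 - S) by
      simp only [Matrix.mul_assoc],
    trace_mul_comm, ← mul_assoc, h1SS, sub_mul, one_mul, trace_sub]

end Frobenius

lemma trace_mul_gram_le_of_frob_le {m n : ℕ} {A : Matrix (Fin m) (Fin n) ℝ}
    {S T : Matrix (Fin n) (Fin n) ℝ} (hSsymm : Sᵀ = S) (hSidem : S * S = S) (hTsymm : Tᵀ = T)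
    (hTidem : T * T = T) (h : frob (A - A * S) ≤ frob (A - A * T)) :
    (T * (Aᵀ * A)).trace ≤ (S * (Aᵀ * A)).trace := by
  have h2 := pow_le_pow_left₀ (frob_nonneg _) h 2
  rw [frob_sq_sub_mul A hSsymm hSidem, frob_sq_sub_mul A hTsymm hTidem] at h2
  linarith

theorem mul_frob_sub_le_two_mul_frob_sub {n : ℕ} {P E C C' : Matrix (Fin n) (Fin n) ℝ} {δ : ℝ}
    (hPsymm : Pᵀ = P) (hPidem : P * P = P) (hEsymm : Eᵀ = E) (hEidem : E * E = E)
    (htrace : P.trace = E.trace) (hEC' : E * C' = C') (hgap : (C' - δ • E).PosSemidef)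
    (hopt : (E * C).trace ≤ (P * C).trace) :
    δ * frob (P - E) ≤ 2 * frob (C' - C) := by
  set F := frob (P - E)
  have hF : F ^ 2 = 2 * (E.trace - (P * E).trace) := by
    rw [frob_sq, transpose_sub, hPsymm, hEsymm, sub_mul, mul_sub, mul_sub, hPidem, hEidem,
      trace_sub, trace_sub, trace_sub, trace_mul_comm E P, htrace]
    ring
  have hgap' : δ * (E.trace - (P * E).trace) ≤ ((E - P) * C').trace := by
    have h := trace_mul_nonneg_of_posSemidef (S := 1 - P)
      (by rw [transpose_sub, transpose_one, hPsymm]) (by simp [sub_mul, mul_sub, hPidem]) hgap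
    simp only [sub_mul, one_mul, mul_sub, mul_smul_comm, trace_sub, trace_smul, smul_eq_mul,
      hEC'] at h ⊢
    linarith
  have hpert : ((E - P) * C').trace ≤ F * frob (C' - C) :=
    calc ((E - P) * C').trace = ((E - P) * C).trace + ((E - P) * (C' - C)).trace := by
          rw [← trace_add, ← mul_add, add_sub_cancel]
      _ ≤ 0 + frob (E - P) * frob (C' - C) :=
          add_le_add (by rw [sub_mul, trace_sub]; linarith) (trace_mul_le_frob _ _)
      _ = F * frob (C' - C) := by rw [zero_add, frob_sub_comm]
  rcases (show 0 ≤ F from frob_nonneg _).eq_or_lt with hF0 | hFpos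
  · rw [← hF0, mul_zero]
    exact mul_nonneg zero_le_two (frob_nonneg _)
  · have key : δ * F ^ 2 ≤ 2 * F * frob (C' - C) := by
      rw [hF]
      linarith
    exact le_of_mul_le_mul_right (by linarith [key, sq F]) hFpos

lemma abs_transpose_mul_self_apply_le {m n : Type*} [Fintype m] {R : Matrix m n ℝ} {i : n}
    (hi : ∀ u, |R u i| ≤ 1) (j : n) : |(Rᵀ * R) i j| ≤ ∑ u, |R u j| := by
  calc |(Rᵀ * R) i j| ≤ ∑ u, |R u i * R u j| := by
        simpa only [mul_apply, transpose_apply] using abs_sum_le_sum_abs _ _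
    _ ≤ ∑ u, |R u j| := sum_le_sum fun u _ => by
        rw [abs_mul]
        exact mul_le_of_le_one_left (abs_nonneg _) (hi u)

lemma abs_gram_mul_diagonal_sub_gram_le {m n : Type*} [Fintype m] [Fintype n] [DecidableEq n]
    {R : Matrix m n ℝ} (hR : ∀ u i, |R u i| ≤ 1) (p : n → Prop) [DecidablePred p] {κ : ℝ}
    (hκ0 : 0 ≤ κ) (hκ : ∀ i, ¬ p i → ∑ u, |R u i| ≤ κ) (i j : n) :
    |((R * diagonal fun k => if p k then (1 : ℝ) else 0)ᵀ *
      (R * diagonal fun k => if p k then (1 : ℝ) else 0) - Rᵀ * R) i j| ≤ κ := by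
  set D : Matrix n n ℝ := diagonal fun k => if p k then 1 else 0
  have hgram : (R * D)ᵀ * (R * D) = D * (Rᵀ * R) * D := by
    rw [transpose_mul, show Dᵀ = D from diagonal_transpose _]
    simp only [Matrix.mul_assoc]
  rw [hgram, Matrix.sub_apply, mul_diagonal, diagonal_mul]
  by_cases hi : p i
  · by_cases hj : p j
    · simp [hi, hj, hκ0]
    · simpa [hi, hj] using (abs_transpose_mul_self_apply_le (fun u => hR u i) j).trans (hκ j hj)
  · have hsymm : (Rᵀ * R) i j = (Rᵀ * R) j i := by simp only [mul_apply, transpose_apply, mul_comm]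
    simpa [hi, hsymm] using (abs_transpose_mul_self_apply_le (fun u => hR u j) i).trans (hκ i hi)

def partialId (n k : ℕ) : Matrix (Fin n) (Fin n) ℝ :=
  diagonal fun i => if (i : ℕ) < k then 1 else 0

lemma transpose_partialId (n k : ℕ) : (partialId n k)ᵀ = partialId n k :=
  diagonal_transpose _

lemma partialId_mul_self (n k : ℕ) : partialId n k * partialId n k = partialId n k := by
  simp [partialId, diagonal_mul_diagonal]

lemma trace_partialId {n k : ℕ} (hk : k ≤ n) : (partialId n k).trace = k := by
  simp [partialId, trace_diagonal, Fin.card_filter_val_lt, hk]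

lemma rank_partialId {n k : ℕ} (hk : k ≤ n) : (partialId n k).rank = k := by
  exact_mod_cast (trace_eq_rank_of_isIdempotentElem (partialId_mul_self n k)).symm.trans
    (trace_partialId hk)

lemma partialId_mul_gram_mul_partialId {m n : ℕ} (R : Matrix (Fin m) (Fin n) ℝ) (k : ℕ) :
    partialId n k * ((R * partialId n k)ᵀ * (R * partialId n k)) =
      (R * partialId n k)ᵀ * (R * partialId n k) := by
  rw [transpose_mul, transpose_partialId]
  simp only [← Matrix.mul_assoc, partialId_mul_self]

lemma frob_gram_mul_partialId_sub_le {m n k : ℕ} {R : Matrix (Fin m) (Fin n) ℝ}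
    (hR : ∀ u i, |R u i| ≤ 1) {κ : ℝ} (hκ0 : 0 ≤ κ)
    (hκ : ∀ i : Fin n, k ≤ (i : ℕ) → ∑ u, |R u i| ≤ κ) :
    frob ((R * partialId n k)ᵀ * (R * partialId n k) - Rᵀ * R) ≤ n * κ := by
  refine (frob_le_of_abs_le hκ0 (abs_gram_mul_diagonal_sub_gram_le hR _ hκ0
    fun i hi => hκ i (not_lt.mp hi))).trans_eq ?_
  rw [Real.sqrt_mul_self n.cast_nonneg]

/-- Davis–Kahan bound for the optimal rank-n̄ projection:
‖P* − I_{n,n̄}‖_F ≤ 2√2·n·κ / σ_{n̄}(R'(n̄))². -/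
theorem stmt_18 {m n : ℕ} (R : Matrix (Fin m) (Fin n) ℝ) (nbar : ℕ)
    (hnbar : nbar < n)
    (hR : ∀ u i, R u i ∈ Set.Icc (0 : ℝ) 1)
    (R' : Matrix (Fin m) (Fin n) ℝ)
    (hR' : ∀ u i, R' u i = if (i : ℕ) < nbar then R u i else 0)
    (hσ : 0 < sortedSV R' nbar)
    (κ : ℝ)
    (hκ : IsGreatest {x : ℝ | ∃ i : Fin n, nbar ≤ (i : ℕ) ∧ x = ∑ u, |R u i|} κ)
    (P : Matrix (Fin n) (Fin n) ℝ)
    (hPsym : Pᵀ = P) (hPidem : P * P = P) (hPrank : P.rank = nbar)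
    (hbest : ∀ Y : Matrix (Fin m) (Fin n) ℝ, Y.rank ≤ nbar →
      frob (R - R * P) ≤ frob (R - Y))
    (Inbar : Matrix (Fin n) (Fin n) ℝ)
    (hInbar : ∀ i j, Inbar i j = if i = j ∧ (i : ℕ) < nbar then 1 else 0) :
    frob (P - Inbar) ≤ 2 * Real.sqrt 2 * n * κ / (sortedSV R' nbar) ^ 2 := by
  obtain rfl : Inbar = partialId n nbar := by
    ext i j
    rw [hInbar, partialId, diagonal_apply]
    by_cases hij : i = j <;> simp [hij]
  obtain rfl : R' = R * partialId n nbar := by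
    ext u i
    simp [hR', partialId, mul_diagonal]
  set E := partialId n nbar
  have hRE : (R * E).rank ≤ nbar := (rank_mul_le_right R E).trans (rank_partialId hnbar.le).le
  obtain ⟨hrank, heig⟩ := rank_transpose_mul_self_eq_and_sortedSV_sq_le hRE hσ
  have hgap := posSemidef_sub_smul_of_mul_eq (isHermitian_transpose_mul_self _)
    (transpose_partialId n nbar) (partialId_mul_self n nbar)
    (partialId_mul_gram_mul_partialId R nbar) (by rw [trace_partialId hnbar.le, hrank]) heig
  have hopt := trace_mul_gram_le_of_frob_le hPsym hPidem (transpose_partialId n nbar)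
    (partialId_mul_self n nbar) (hbest _ hRE)
  have hDK := mul_frob_sub_le_two_mul_frob_sub hPsym hPidem (transpose_partialId n nbar)
    (partialId_mul_self n nbar)
    (by rw [trace_eq_rank_of_isIdempotentElem hPidem, hPrank, trace_partialId hnbar.le])
    (partialId_mul_gram_mul_partialId R nbar) hgap hopt
  have hκ0 : 0 ≤ κ := by
    obtain ⟨i, -, rfl⟩ := hκ.1
    positivity
  have hpert := frob_gram_mul_partialId_sub_le (k := nbar)
    (fun u i => abs_le.mpr ⟨by linarith [(hR u i).1], (hR u i).2⟩) hκ0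
    fun i hi => hκ.2 ⟨i, hi, rfl⟩
  calc frob (P - E) ≤ 2 * frob ((R * E)ᵀ * (R * E) - Rᵀ * R) / sortedSV (R * E) nbar ^ 2 := by
        rw [le_div_iff₀' (by positivity)]
        exact hDK
    _ ≤ 2 * (n * κ) / sortedSV (R * E) nbar ^ 2 := by gcongr
    _ ≤ 2 * √2 * n * κ / sortedSV (R * E) nbar ^ 2 := by
        gcongr ?_ / _
        nlinarith [Real.one_lt_sqrt_two, mul_nonneg n.cast_nonneg hκ0]
end
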